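/- Let k ∈ ℂ, let z₁, z₂ ∈ ℂ be nonzero, let L₁, L₂ ∈ ℂ, and define c_n = (−1)^n · (L₁ · z₁^{−n} + L₂ · z₂^{−n}) · γ_n(k) for n ∈ ℕ. Then for every n ∈ ℕ: ((k − n)/((n+1) · z₂)) · c_n + c_{n+1} = (−1)^n · L₁ · (z₂^{−1} − z₁^{−1}) · γ_{n+1}(k) · z₁^{−n}. -/

import Mathlib

/-- The generalized binomial coefficient γ_n(k) = k(k−1)⋯(k−n+1)/n!, with γ_0(k) = 1. -/
noncomputable def genBinom (k : ℂ) (n : ℕ) : ℂ :=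
  (∏ i ∈ Finset.range n, (k - i)) / (n.factorial : ℂ)

lemma genBinom_succ (k : ℂ) (n : ℕ) :
    genBinom k (n + 1) = (k - n) / (n + 1) * genBinom k n := by
  have hf : (n.factorial : ℂ) ≠ 0 := by exact_mod_cast n.factorial_ne_zero
  have hn : (n : ℂ) + 1 ≠ 0 := Nat.cast_add_one_ne_zero n
  simp only [genBinom, Finset.prod_range_succ, Nat.factorial_succ]
  push_cast
  field_simp

lemma zpow_neg_natCast_succ {G₀ : Type*} [DivisionMonoid G₀] (z : G₀) (n : ℕ) :
    z ^ (-((n + 1 : ℕ) : ℤ)) = z ^ (-(n : ℤ)) * z⁻¹ := by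
  simp only [zpow_neg, zpow_natCast, pow_succ', mul_inv_rev]

theorem stmt_14_general (k z₁ z₂ L₁ L₂ : ℂ) (c : ℕ → ℂ)
    (hc : ∀ n : ℕ,
      c n = (-1) ^ n * (L₁ * z₁ ^ (-(n : ℤ)) + L₂ * z₂ ^ (-(n : ℤ))) * genBinom k n)
    (n : ℕ) :
    ((k - (n : ℂ)) / (((n : ℂ) + 1) * z₂)) * c n + c (n + 1) =
      (-1) ^ n * L₁ * (z₂⁻¹ - z₁⁻¹) * genBinom k (n + 1) * z₁ ^ (-(n : ℤ)) := by
  rw [hc, hc, genBinom_succ, zpow_neg_natCast_succ, zpow_neg_natCast_succ,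
    div_mul_eq_div_mul_one_div]
  ring

/-- The elimination identity (21a): for the coefficients
c_n = (−1)^n (L₁z₁^{−n} + L₂z₂^{−n}) γ_n(k) of two equal-order singularities,
((k−n)/((n+1)z₂))c_n + c_{n+1} = (−1)^n L₁ (z₂⁻¹ − z₁⁻¹) γ_{n+1}(k) z₁^{−n}. -/
theorem stmt_14 (k z₁ z₂ L₁ L₂ : ℂ) (hz₁ : z₁ ≠ 0) (hz₂ : z₂ ≠ 0) (c : ℕ → ℂ)
    (hc : ∀ n : ℕ,
      c n = (-1) ^ n * (L₁ * z₁ ^ (-(n : ℤ)) + L₂ * z₂ ^ (-(n : ℤ))) * genBinom k n)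
    (n : ℕ) :
    ((k - (n : ℂ)) / (((n : ℂ) + 1) * z₂)) * c n + c (n + 1) =
      (-1) ^ n * L₁ * (z₂⁻¹ - z₁⁻¹) * genBinom k (n + 1) * z₁ ^ (-(n : ℤ)) :=
  stmt_14_general k z₁ z₂ L₁ L₂ c hc n
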